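/- arXiv:2407.14441 — 3 statements merged into one kernel-verified Lean document; each statement's English description precedes it below -/
import Mathlib

section
/- Let M ∈ ℝ and let ξ = (ξ₂, ξ₁, ξ₀, ξ₋₁, ξ₋₂) ∈ ℝ⁵ satisfy ξ₂²+ξ₁²+ξ₀²+ξ₋₁²+ξ₋₂² = 1 and 2ξ₂²+ξ₁²−ξ₋₁²−2ξ₋₂² = M. Then τ(ξ)² + 4δ(ξ)² ≤ 4 − M². -/
noncomputable section

/-- τ for real 5-vectors (ξ₂, ξ₁, ξ₀, ξ₋₁, ξ₋₂). -/
def tauR (x2 x1 x0 xm1 xm2 : ℝ) : ℝ :=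
  2 * (x2 * x1 + xm1 * xm2) + Real.sqrt 6 * (x1 * x0 + x0 * xm1)

/-- δ for real 5-vectors. -/
def deltaR (x2 x1 x0 xm1 xm2 : ℝ) : ℝ :=
  2 * x2 * xm2 - 2 * x1 * xm1 + x0 ^ 2

set_option maxHeartbeats 1000000 in
theorem stmt0 (M x2 x1 x0 xm1 xm2 : ℝ)
    (h1 : x2 ^ 2 + x1 ^ 2 + x0 ^ 2 + xm1 ^ 2 + xm2 ^ 2 = 1)
    (h2 : 2 * x2 ^ 2 + x1 ^ 2 - xm1 ^ 2 - 2 * xm2 ^ 2 = M) :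
    tauR x2 x1 x0 xm1 xm2 ^ 2 + 4 * deltaR x2 x1 x0 xm1 xm2 ^ 2 ≤ 4 - M ^ 2 := by
  subst h2
  unfold tauR deltaR
  have hs6 : Real.sqrt 6 ^ 2 = 6 := Real.sq_sqrt (by norm_num)
  set s := Real.sqrt 6 with hsdef
  have hS : 0 ≤ (2*(x2 ^ 2 + x1 ^ 2 + x0 ^ 2 + xm1 ^ 2 + xm2 ^ 2))^2
      - (2 * x2 ^ 2 + x1 ^ 2 - xm1 ^ 2 - 2 * xm2 ^ 2)^2
      - (2 * (x2 * x1 + xm1 * xm2) + s * (x1 * x0 + x0 * xm1))^2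
      - 4 * (2 * x2 * xm2 - 2 * x1 * xm1 + x0 ^ 2)^2 := by
    rcases le_or_gt (3*(x2+xm2)^2 - 2*s*(x2+xm2)*x0 + 10*x0^2 + 6*(x1-xm1)^2) 0 with h0 | h0
    · -- degenerate case: x2+xm2 = 0, x0 = 0, x1 = xm1
      have hsum : 2*(x2+xm2)^2 + ((x2+xm2) - s*x0)^2 + 4*x0^2 + 6*(x1-xm1)^2 ≤ 0 := by
        calc 2*(x2+xm2)^2 + ((x2+xm2) - s*x0)^2 + 4*x0^2 + 6*(x1-xm1)^2
            = (3*(x2+xm2)^2 - 2*s*(x2+xm2)*x0 + 10*x0^2 + 6*(x1-xm1)^2) + (s^2 - 6)*x0^2 := by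
              ring
          _ = (3*(x2+xm2)^2 - 2*s*(x2+xm2)*x0 + 10*x0^2 + 6*(x1-xm1)^2) + (6 - 6)*x0^2 := by
              rw [hs6]
          _ ≤ 0 := by linarith
      have hp : x2 + xm2 = 0 := by
        have h' : (x2+xm2)^2 = 0 := le_antisymm
          (by nlinarith [sq_nonneg ((x2+xm2) - s*x0), sq_nonneg x0, sq_nonneg (x1-xm1)])
          (sq_nonneg _)
        exact pow_eq_zero_iff (two_ne_zero) |>.mp h'
      have hc : x0 = 0 := by
        have h' : x0^2 = 0 := le_antisymm
          (by nlinarith [sq_nonneg ((x2+xm2) - s*x0), sq_nonneg (x2+xm2), sq_nonneg (x1-xm1)])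
          (sq_nonneg _)
        exact pow_eq_zero_iff (two_ne_zero) |>.mp h'
      have ht : x1 - xm1 = 0 := by
        have h' : (x1-xm1)^2 = 0 := le_antisymm
          (by nlinarith [sq_nonneg ((x2+xm2) - s*x0), sq_nonneg (x2+xm2), sq_nonneg x0])
          (sq_nonneg _)
        exact pow_eq_zero_iff (two_ne_zero) |>.mp h'
      have e1 : xm2 = -x2 := by linarith
      have e2 : xm1 = x1 := by linarith
      subst e1
      subst hc
      have e2' : xm1 = x1 := e2
      exact le_of_eq (by rw [e2']; ring)
    · -- main case: divide by the positive multiplier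
      have key : 6*(3*(x2+xm2)^2 - 2*s*(x2+xm2)*x0 + 10*x0^2 + 6*(x1-xm1)^2) *
          ((2*(x2 ^ 2 + x1 ^ 2 + x0 ^ 2 + xm1 ^ 2 + xm2 ^ 2))^2
            - (2 * x2 ^ 2 + x1 ^ 2 - xm1 ^ 2 - 2 * xm2 ^ 2)^2
            - (2 * (x2 * x1 + xm1 * xm2) + s * (x1 * x0 + x0 * xm1))^2
            - 4 * (2 * x2 * xm2 - 2 * x1 * xm1 + x0 ^ 2)^2)
          = 6*((3*(x2+xm2)^2 - 2*s*(x2+xm2)*x0 + 2*x0^2 + 3*(x1-xm1)^2)*(x1+xm1)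
                - ((x1-xm1)*(3*(x2+xm2) + s*x0))*(x2-xm2))^2
            + 6*((3*(x1-xm1)^2 + 8*x0^2)*(x2-xm2)
                - ((x1-xm1)*(3*(x2+xm2) + s*x0))*(x1+xm1))^2
            + (12*(x2+xm2)*x0 - 3*s*(x1-xm1)^2 - 4*s*x0^2)^2 * ((x2-xm2)^2 + (x1+xm1)^2) := by
        linear_combination ((-9)*xm1^4*xm2^2 + (-9)*xm1^6 + (-48)*x0^2*xm1^2*xm2^2 + (-66)*x0^2*xm1^4 + (12)*x0^3*xm1^2*xm2*s + (-16)*x0^4*xm2^2 + (-76)*x0^4*xm1^2 + (36)*x1*xm1^3*xm2^2 + (18)*x1*xm1^5 + (24)*x1*x0^2*xm1*xm2^2 + (24)*x1*x0^3*xm1*xm2*s + (-152)*x1*x0^4*xm1 + (-54)*x1^2*xm1^2*xm2^2 + (9)*x1^2*xm1^4 + (-48)*x1^2*x0^2*xm2^2 + (132)*x1^2*x0^2*xm1^2 + (12)*x1^2*x0^3*xm2*s + (-76)*x1^2*x0^4 + (36)*x1^3*xm1*xm2^2 + (-36)*x1^3*xm1^3 + (-9)*x1^4*xm2^2 + (9)*x1^4*xm1^2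 + (-66)*x1^4*x0^2 + (18)*x1^5*xm1 + (-9)*x1^6 + (18)*x2*xm1^4*xm2 + (24)*x2*x0^2*xm1^2*xm2 + (12)*x2*x0^3*xm1^2*s + (32)*x2*x0^4*xm2 + (-72)*x2*x1*xm1^3*xm2 + (-192)*x2*x1*x0^2*xm1*xm2 + (24)*x2*x1*x0^3*xm1*s + (108)*x2*x1^2*xm1^2*xm2 + (24)*x2*x1^2*x0^2*xm2 + (12)*x2*x1^2*x0^3*s + (-72)*x2*x1^3*xm1*xm2 + (18)*x2*x1^4*xm2 + (-9)*x2^2*xm1^4 + (-48)*x2^2*x0^2*xm1^2 + (-16)*x2^2*x0^4 + (36)*x2^2*x1*xm1^3 + (24)*x2^2*x1*x0^2*xm1 + (-54)*x2^2*x1^2*xm1^2 + (-48)*x2^2*x1^2*x0^2 + (36)*x2^2*x1^3*xm1 + (-9)*x2^2*x1^4) * hs6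
      have hprod : 0 ≤ 6*(3*(x2+xm2)^2 - 2*s*(x2+xm2)*x0 + 10*x0^2 + 6*(x1-xm1)^2) *
          ((2*(x2 ^ 2 + x1 ^ 2 + x0 ^ 2 + xm1 ^ 2 + xm2 ^ 2))^2
            - (2 * x2 ^ 2 + x1 ^ 2 - xm1 ^ 2 - 2 * xm2 ^ 2)^2
            - (2 * (x2 * x1 + xm1 * xm2) + s * (x1 * x0 + x0 * xm1))^2
            - 4 * (2 * x2 * xm2 - 2 * x1 * xm1 + x0 ^ 2)^2) := by
        rw [key]; positivity
      have h6 : 0 < 6*(3*(x2+xm2)^2 - 2*s*(x2+xm2)*x0 + 10*x0^2 + 6*(x1-xm1)^2) := by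
        linarith
      exact (mul_nonneg_iff_of_pos_left h6).mp hprod
  rw [h1] at hS
  norm_num at hS
  linarith [hS]
end
end

section
/- Let M ∈ [0, 2] and let t, d ∈ ℝ satisfy t² + 4d² ≤ 4 − M². Then there exists ξ = (ξ₂, ξ₁, ξ₀, ξ₋₁, ξ₋₂) ∈ ℝ⁵ with ξ₂²+ξ₁²+ξ₀²+ξ₋₁²+ξ₋₂² = 1, 2ξ₂²+ξ₁²−ξ₋₁²−2ξ₋₂² = M, τ(ξ) = t and δ(ξ) = d. -/
noncomputable section

lemma key (A B C u v : ℝ) (hA : A ^ 2 + B ^ 2 + C ^ 2 = 1) (hu : u ^ 2 + v ^ 2 = 1) :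
    ∃ x2 x1 x0 xm1 xm2 : ℝ,
      x2 ^ 2 + x1 ^ 2 + x0 ^ 2 + xm1 ^ 2 + xm2 ^ 2 = 1 ∧
      2 * x2 ^ 2 + x1 ^ 2 - xm1 ^ 2 - 2 * xm2 ^ 2 = 2 * (A ^ 2 - B ^ 2) * (u ^ 2 - v ^ 2) ∧
      tauR x2 x1 x0 xm1 xm2 = 4 * (A ^ 2 - B ^ 2) * (u * v) ∧
      deltaR x2 x1 x0 xm1 xm2 = 2 * A * B + C ^ 2 := by
  set q : ℝ := Real.sqrt 6 with hqdef
  have hq : q ^ 2 = 6 := Real.sq_sqrt (by norm_num)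
  refine ⟨A*u^4 + q*C*u^2*v^2 + B*v^4,
          2*A*u^3*v - q*C*u*v*(u^2-v^2) - 2*B*u*v^3,
          q*(A+B)*u^2*v^2 + C*((u^2-v^2)^2 - 2*u^2*v^2),
          2*A*u*v^3 + q*C*u*v*(u^2-v^2) - 2*B*u^3*v,
          A*v^4 + q*C*u^2*v^2 + B*u^4, ?_, ?_, ?_, ?_⟩
  · linear_combination ((2 : ℝ) * C^2 * u^2 * v^6 + (-2 : ℝ) * C^2 * u^4 * v^4 + (2 : ℝ) * C^2 * u^6 * v^2 + (1 : ℝ) * B^2 * u^4 * v^4 + (2 : ℝ) * A * B * u^4 * v^4 + (1 : ℝ) * A^2 * u^4 * v^4) * hq + ((1 : ℝ) * C^2 + (1 : ℝ) * C^2 * v^2 + (1 : ℝ) * C^2 * v^4 + (1 : ℝ) * C^2 * v^6 + (1 : ℝ) * C^2 * u^2 + (2 : ℝ) * C^2 * u^2 * v^2 + (3 : ℝ) * C^2 * u^2 * v^4 + (1 : ℝ) * C^2 * u^4 + (3 : ℝ) * C^2 * u^4 * v^2 + (1 : ℝ) * C^2 * u^6 + (1 : ℝ) * B^2 + (1 :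 ℝ) * B^2 * v^2 + (1 : ℝ) * B^2 * v^4 + (1 : ℝ) * B^2 * v^6 + (1 : ℝ) * B^2 * u^2 + (2 : ℝ) * B^2 * u^2 * v^2 + (3 : ℝ) * B^2 * u^2 * v^4 + (1 : ℝ) * B^2 * u^4 + (3 : ℝ) * B^2 * u^4 * v^2 + (1 : ℝ) * B^2 * u^6 + (1 : ℝ) * A^2 + (1 : ℝ) * A^2 * v^2 + (1 : ℝ) * A^2 * v^4 + (1 : ℝ) * A^2 * v^6 + (1 : ℝ) * A^2 * u^2 + (2 : ℝ) * A^2 * u^2 * v^2 + (3 : ℝ) * A^2 * u^2 * v^4 + (1 : ℝ) * A^2 * u^4 + (3 : ℝ) * A^2 * u^4 * v^2 + (1 : ℝ) * A^2 * u^6) * hu + ((1 : ℝ)) * hA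
  · linear_combination (0) * hq + ((2 : ℝ) * B^2 * v^2 + (2 : ℝ) * B^2 * v^4 + (2 : ℝ) * B^2 * v^6 + (-2 : ℝ) * B^2 * u^2 + (2 : ℝ) * B^2 * u^2 * v^4 + (-2 : ℝ) * B^2 * u^4 + (-2 : ℝ) * B^2 * u^4 * v^2 + (-2 : ℝ) * B^2 * u^6 + (-2 : ℝ) * A^2 * v^2 + (-2 : ℝ) * A^2 * v^4 + (-2 : ℝ) * A^2 * v^6 + (2 : ℝ) * A^2 * u^2 + (-2 : ℝ) * A^2 * u^2 * v^4 + (2 : ℝ) * A^2 * u^4 + (2 : ℝ) * A^2 * u^4 * v^2 + (2 : ℝ) * A^2 * u^6) * hu + (0) * hA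
  · unfold tauR
    rw [← hqdef]
    linear_combination ((-2 : ℝ) * B^2 * u^3 * v^5 + (-2 : ℝ) * B^2 * u^5 * v^3 + (2 : ℝ) * A^2 * u^3 * v^5 + (2 : ℝ) * A^2 * u^5 * v^3) * hq + ((-4 : ℝ) * B^2 * u * v + (-4 : ℝ) * B^2 * u * v^3 + (-4 : ℝ) * B^2 * u * v^5 + (-4 : ℝ) * B^2 * u^3 * v + (-8 : ℝ) * B^2 * u^3 * v^3 + (-4 : ℝ) * B^2 * u^5 * v + (4 : ℝ) * A^2 * u * v + (4 : ℝ) * A^2 * u * v^3 + (4 : ℝ) * A^2 * u * v^5 + (4 : ℝ) * A^2 * u^3 * v + (8 : ℝ) * A^2 * u^3 * v^3 + (4 : ℝ) * A^2 * u^5 * v) * hu + (0) * hA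
  · unfold deltaR
    linear_combination ((2 : ℝ) * C^2 * u^2 * v^6 + (-2 : ℝ) * C^2 * u^4 * v^4 + (2 : ℝ) * C^2 * u^6 * v^2 + (1 : ℝ) * B^2 * u^4 * v^4 + (2 : ℝ) * A * B * u^4 * v^4 + (1 : ℝ) * A^2 * u^4 * v^4) * hq + ((1 : ℝ) * C^2 + (1 : ℝ) * C^2 * v^2 + (1 : ℝ) * C^2 * v^4 + (1 : ℝ) * C^2 * v^6 + (1 : ℝ) * C^2 * u^2 + (2 : ℝ) * C^2 * u^2 * v^2 + (3 : ℝ) * C^2 * u^2 * v^4 + (1 : ℝ) * C^2 * u^4 + (3 : ℝ) * C^2 * u^4 * v^2 + (1 : ℝ) * C^2 * u^6 + (2 : ℝ) * A * B + (2 : ℝ) * A * B * v^2 + (2 : ℝ) * A * B * v^4 + (2 : ℝ) * A * B * v^6 + (2 : ℝ) * A * B * u^2 + (4 : ℝ) * A * B * u^2 * v^2 + (6 : ℝ) * A * B * u^2 * v^4 + (2 : ℝ) * A * B * u^4 + (6 : ℝ) * A * B * u^4 * v^2 + (2 : ℝ) * A * B * u^6) * hu + (0) * hA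

theorem stmt1 (M t d : ℝ) (hM0 : 0 ≤ M) (hM2 : M ≤ 2)
    (h : t ^ 2 + 4 * d ^ 2 ≤ 4 - M ^ 2) :
    ∃ x2 x1 x0 xm1 xm2 : ℝ,
      x2 ^ 2 + x1 ^ 2 + x0 ^ 2 + xm1 ^ 2 + xm2 ^ 2 = 1 ∧
      2 * x2 ^ 2 + x1 ^ 2 - xm1 ^ 2 - 2 * xm2 ^ 2 = M ∧
      tauR x2 x1 x0 xm1 xm2 = t ∧ deltaR x2 x1 x0 xm1 xm2 = d := by
  by_cases hz : M = 0 ∧ t = 0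
  · obtain ⟨hM, ht⟩ := hz
    subst hM ht
    have hd1 : d ≤ 1 := by nlinarith
    have hd2 : -1 ≤ d := by nlinarith
    obtain ⟨A, hA2⟩ : ∃ A : ℝ, A ^ 2 = (1 - d) / 4 :=
      ⟨Real.sqrt ((1 - d) / 4), Real.sq_sqrt (by linarith)⟩
    obtain ⟨C, hC2⟩ : ∃ C : ℝ, C ^ 2 = (1 + d) / 2 :=
      ⟨Real.sqrt ((1 + d) / 2), Real.sq_sqrt (by linarith)⟩
    obtain ⟨x2, x1, x0, xm1, xm2, h1, h2, h3, h4⟩ :=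
      key A (-A) C 1 0 (by linear_combination 2 * hA2 + hC2) (by norm_num)
    exact ⟨x2, x1, x0, xm1, xm2, h1, by rw [h2]; ring, by rw [h3]; ring,
      by rw [h4]; linear_combination (-2 : ℝ) * hA2 + hC2⟩
  · obtain ⟨ρ, hρpos, hρ2⟩ : ∃ ρ : ℝ, 0 < ρ ∧ ρ ^ 2 = M ^ 2 + t ^ 2 := by
      refine ⟨Real.sqrt (M ^ 2 + t ^ 2), Real.sqrt_pos.mpr ?_, Real.sq_sqrt (by positivity)⟩
      rcases (not_and_or.mp hz) with hM | ht
      · have : 0 < M ^ 2 := by positivity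
        nlinarith
      · have : 0 < t ^ 2 := by positivity
        nlinarith
    have hρM : ρ ^ 2 + 4 * d ^ 2 ≤ 4 := by nlinarith
    have hd1 : d ^ 2 < 1 := by nlinarith
    have hdlt : d < 1 := by nlinarith
    obtain ⟨β, hβpos, hβ2⟩ : ∃ β : ℝ, 0 < β ∧ β ^ 2 = 1 - d :=
      ⟨Real.sqrt (1 - d), Real.sqrt_pos.mpr (by linarith), Real.sq_sqrt (by linarith)⟩
    have hβne : β ≠ 0 := ne_of_gt hβpos
    set α : ℝ := ρ / (2 * β) with hαdef
    have hαβ : α * β = ρ / 2 := by rw [hαdef]; field_simp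
    have hα2 : α ^ 2 * (4 * β ^ 2) = ρ ^ 2 := by rw [hαdef]; field_simp; ring
    have hCarg : 0 ≤ 1 - (α ^ 2 + β ^ 2) / 2 := by nlinarith
    obtain ⟨C, hC2⟩ : ∃ C : ℝ, C ^ 2 = 1 - (α ^ 2 + β ^ 2) / 2 :=
      ⟨Real.sqrt _, Real.sq_sqrt hCarg⟩
    set A : ℝ := (α + β) / 2 with hAdef
    set B : ℝ := (α - β) / 2 with hBdef
    have hABsum : A ^ 2 + B ^ 2 + C ^ 2 = 1 := by
      rw [hAdef, hBdef]; linear_combination hC2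
    have hAB : A ^ 2 - B ^ 2 = ρ / 2 := by
      rw [hAdef, hBdef]; linear_combination hαβ
    obtain ⟨u, hupos, hu2⟩ : ∃ u : ℝ, 0 < u ∧ 2 * ρ * u ^ 2 = ρ + M := by
      have harg : 0 < (ρ + M) / (2 * ρ) := by positivity
      refine ⟨Real.sqrt ((ρ + M) / (2 * ρ)), Real.sqrt_pos.mpr harg, ?_⟩
      rw [Real.sq_sqrt (le_of_lt harg)]
      field_simp
    have hune : u ≠ 0 := ne_of_gt hupos
    have hρne : ρ ≠ 0 := ne_of_gt hρpos
    set v : ℝ := t / (2 * ρ * u) with hvdef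
    have hv : v * (2 * ρ * u) = t := by rw [hvdef]; field_simp
    have hs : (u ^ 2 + v ^ 2 - 1) * (2 * ρ * (ρ + M)) = 0 := by
      linear_combination (ρ + M - 2 * ρ * v ^ 2) * hu2 + (v * (2 * ρ * u) + t) * hv - hρ2
    have hρMpos : 0 < 2 * ρ * (ρ + M) := by positivity
    have hsum : u ^ 2 + v ^ 2 = 1 := by
      rcases mul_eq_zero.mp hs with h' | h'
      · linarith
      · exact absurd h' (ne_of_gt hρMpos)
    obtain ⟨x2, x1, x0, xm1, xm2, h1, h2, h3, h4⟩ := key A B C u v hABsum hsum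
    refine ⟨x2, x1, x0, xm1, xm2, h1, ?_, ?_, ?_⟩
    · rw [h2, hAB]
      have hv2 : v ^ 2 = 1 - u ^ 2 := by linarith
      rw [hv2]
      linear_combination hu2
    · rw [h3, hAB]
      linear_combination hv
    · rw [h4]
      have hABp : 2 * A * B = (α ^ 2 - β ^ 2) / 2 := by rw [hAdef, hBdef]; ring
      rw [hABp, hC2]
      linarith [hβ2]
end
end

section
/- Let M ∈ [0, 2) and let c₋₂, c₋₁, c₀, c₁, c₂ be nonnegative real numbers such that Σ_{ℓ ∈ {−2,...,2}, ℓ < M} c_ℓ > 0 and Σ_{ℓ ∈ {−2,...,2}, ℓ > M} c_ℓ > 0. Then the function g(λ) = Σ_{ℓ=−2}^{2} (ℓ − M) c_ℓ λ^{ℓ+2} has exactly one root λ* in the interval (0, ∞). -/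
open Real

noncomputable def G (M cm2 cm1 c0 c1 c2 : ℝ) : ℝ → ℝ := fun x =>
  (-2 - M) * cm2 + (-1 - M) * cm1 * x + (0 - M) * c0 * x ^ 2
    + (1 - M) * c1 * x ^ 3 + (2 - M) * c2 * x ^ 4

lemma negpoint (M cm2 cm1 c0 c1 c2 : ℝ) (hM0 : 0 ≤ M) (hM2 : M < 2)
    (hcm2 : 0 ≤ cm2) (hcm1 : 0 ≤ cm1) (hc0 : 0 ≤ c0) (hc1 : 0 ≤ c1) (hc2 : 0 ≤ c2)
    (hstrict : 0 < cm2 ∨ 0 < cm1 ∨ (0 < M ∧ 0 < c0) ∨ (1 < M ∧ 0 < c1)) :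
    ∃ x, 0 < x ∧ G M cm2 cm1 c0 c1 c2 x < 0 := by
  rcases hstrict with h | h | ⟨hm, h⟩ | ⟨hm, h⟩
  · refine ⟨min 1 (cm2 / (c1 + c2 + 1)), lt_min one_pos (by positivity), ?_⟩
    set t := min 1 (cm2 / (c1 + c2 + 1)) with ht
    have htp : 0 < t := lt_min one_pos (by positivity)
    have ht1 : t ≤ 1 := min_le_left _ _
    have htF : t * (c1 + c2 + 1) ≤ cm2 := by
      have := min_le_right 1 (cm2 / (c1 + c2 + 1))
      rw [le_div_iff₀ (by positivity)] at this
      linarith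
    simp only [G]
    have w1 : (0:ℝ) ≤ t - t ^ 3 := by
      nlinarith [mul_nonneg (mul_nonneg htp.le (sub_nonneg.2 ht1))
        (show (0:ℝ) ≤ 1 + t by linarith)]
    have w2 : (0:ℝ) ≤ t - t ^ 4 := by
      nlinarith [mul_nonneg (mul_nonneg htp.le (sub_nonneg.2 ht1))
        (show (0:ℝ) ≤ 1 + t + t ^ 2 by positivity)]
    nlinarith [mul_nonneg hM0 hcm2, mul_nonneg (mul_nonneg hcm1 htp.le) hM0,
      mul_nonneg hcm1 htp.le, mul_nonneg hM0 (mul_nonneg hc0 (sq_nonneg t)),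
      mul_nonneg hM0 (mul_nonneg hc1 (pow_nonneg htp.le 3)),
      mul_nonneg hM0 (mul_nonneg hc2 (pow_nonneg htp.le 4)),
      mul_nonneg hc1 w1, mul_nonneg hc2 w2]
  · refine ⟨min 1 (cm1 / (2 * (c1 + c2) + 1)), lt_min one_pos (by positivity), ?_⟩
    set t := min 1 (cm1 / (2 * (c1 + c2) + 1)) with ht
    have htp : 0 < t := lt_min one_pos (by positivity)
    have ht1 : t ≤ 1 := min_le_left _ _
    have htF : t * (2 * (c1 + c2) + 1) ≤ cm1 := by
      have := min_le_right 1 (cm1 / (2 * (c1 + c2) + 1))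
      rw [le_div_iff₀ (by positivity)] at this
      linarith
    have key : (c1 + 2 * c2) * t ≤ cm1 - t := by nlinarith [mul_nonneg hc1 htp.le]
    have key2 : (c1 + 2 * c2) * t * t ≤ (cm1 - t) * t :=
      mul_le_mul_of_nonneg_right key htp.le
    simp only [G]
    have w1 : (0:ℝ) ≤ t ^ 2 - t ^ 3 := by
      nlinarith [mul_nonneg (sq_nonneg t) (sub_nonneg.2 ht1)]
    have w2 : (0:ℝ) ≤ t ^ 2 - t ^ 4 := by
      nlinarith [mul_nonneg (mul_nonneg (sq_nonneg t) (sub_nonneg.2 ht1))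
        (show (0:ℝ) ≤ 1 + t by linarith)]
    nlinarith [mul_nonneg hM0 hcm2, mul_nonneg hM0 (mul_nonneg hcm1 htp.le),
      mul_nonneg hM0 (mul_nonneg hc0 (sq_nonneg t)),
      mul_nonneg hM0 (mul_nonneg hc1 (pow_nonneg htp.le 3)),
      mul_nonneg hM0 (mul_nonneg hc2 (pow_nonneg htp.le 4)),
      mul_nonneg hc1 w1, mul_nonneg hc2 w2, mul_pos htp htp]
  · refine ⟨min 1 (M * c0 / (2 * (c1 + c2) + 1)), lt_min one_pos (by positivity), ?_⟩
    set t := min 1 (M * c0 / (2 * (c1 + c2) + 1)) with ht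
    have htp : 0 < t := lt_min one_pos (by positivity)
    have ht1 : t ≤ 1 := min_le_left _ _
    have htF : t * (2 * (c1 + c2) + 1) ≤ M * c0 := by
      have := min_le_right 1 (M * c0 / (2 * (c1 + c2) + 1))
      rw [le_div_iff₀ (by positivity)] at this
      linarith
    have key : (c1 + 2 * c2) * t ≤ M * c0 - t := by nlinarith [mul_nonneg hc1 htp.le]
    have key2 : (c1 + 2 * c2) * t * t ^ 2 ≤ (M * c0 - t) * t ^ 2 :=
      mul_le_mul_of_nonneg_right key (sq_nonneg t)
    simp only [G]
    have w2 : (0:ℝ) ≤ t ^ 3 - t ^ 4 := by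
      nlinarith [mul_nonneg (pow_nonneg htp.le 3) (sub_nonneg.2 ht1)]
    nlinarith [mul_nonneg hM0 hcm2, mul_nonneg hM0 (mul_nonneg hcm1 htp.le),
      mul_nonneg hcm1 htp.le,
      mul_nonneg hM0 (mul_nonneg hc1 (pow_nonneg htp.le 3)),
      mul_nonneg hM0 (mul_nonneg hc2 (pow_nonneg htp.le 4)),
      mul_nonneg hc2 w2, mul_pos (mul_pos htp htp) htp]
  · have hdp : 0 < (M - 1) * c1 / (2 * c2 + 1) :=
      div_pos (by nlinarith) (by positivity)
    refine ⟨min 1 ((M - 1) * c1 / (2 * c2 + 1)), lt_min one_pos hdp, ?_⟩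
    set t := min 1 ((M - 1) * c1 / (2 * c2 + 1)) with ht
    have htp : 0 < t := lt_min one_pos hdp
    have ht1 : t ≤ 1 := min_le_left _ _
    have htF : t * (2 * c2 + 1) ≤ (M - 1) * c1 := by
      have := min_le_right 1 ((M - 1) * c1 / (2 * c2 + 1))
      rw [le_div_iff₀ (by positivity)] at this
      linarith
    have key : 2 * c2 * t ≤ (M - 1) * c1 - t := by linarith
    have key2 : 2 * c2 * t * t ^ 3 ≤ ((M - 1) * c1 - t) * t ^ 3 :=
      mul_le_mul_of_nonneg_right key (pow_nonneg htp.le 3)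
    simp only [G]
    nlinarith [mul_nonneg hM0 hcm2, mul_nonneg hM0 (mul_nonneg hcm1 htp.le),
      mul_nonneg hcm1 htp.le, mul_nonneg hM0 (mul_nonneg hc0 (sq_nonneg t)),
      mul_nonneg hM0 (mul_nonneg hc2 (pow_nonneg htp.le 4)),
      mul_pos (mul_pos (mul_pos htp htp) htp) htp]

lemma pospoint (M cm2 cm1 c0 c1 c2 : ℝ) (hM0 : 0 ≤ M) (hM2 : M < 2)
    (hcm2 : 0 ≤ cm2) (hcm1 : 0 ≤ cm1) (hc0 : 0 ≤ c0) (hc1 : 0 ≤ c1) (hc2 : 0 ≤ c2)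
    (hpos : 0 < c2 ∨ (M < 1 ∧ 0 < c1)) :
    ∃ y, 0 < y ∧ 0 < G M cm2 cm1 c0 c1 c2 y := by
  rcases hpos with h | ⟨hm, h⟩
  · have hp : 0 < (2 - M) * c2 := by nlinarith
    refine ⟨max 1 ((4 * (cm2 + cm1 + c0 + c1) + 1) / ((2 - M) * c2)),
      lt_max_of_lt_left one_pos, ?_⟩
    set y := max 1 ((4 * (cm2 + cm1 + c0 + c1) + 1) / ((2 - M) * c2)) with hy
    have hy1 : 1 ≤ y := le_max_left _ _
    have hy0 : 0 < y := lt_of_lt_of_le one_pos hy1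
    have hyF : 4 * (cm2 + cm1 + c0 + c1) + 1 ≤ (2 - M) * c2 * y := by
      have := le_max_right 1 ((4 * (cm2 + cm1 + c0 + c1) + 1) / ((2 - M) * c2))
      rw [div_le_iff₀ hp] at this
      linarith
    have key2 : (4 * (cm2 + cm1 + c0 + c1) + 1) * y ^ 3 ≤ (2 - M) * c2 * y * y ^ 3 :=
      mul_le_mul_of_nonneg_right hyF (pow_nonneg hy0.le 3)
    simp only [G]
    have w1 : (0:ℝ) ≤ y ^ 3 - 1 := by
      nlinarith [mul_nonneg (sub_nonneg.2 hy1) (show (0:ℝ) ≤ y ^ 2 + y + 1 by positivity)]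
    have w2 : (0:ℝ) ≤ y ^ 3 - y := by
      nlinarith [mul_nonneg (mul_nonneg hy0.le (sub_nonneg.2 hy1))
        (show (0:ℝ) ≤ y + 1 by linarith)]
    have w3 : (0:ℝ) ≤ y ^ 3 - y ^ 2 := by
      nlinarith [mul_nonneg (sq_nonneg y) (sub_nonneg.2 hy1)]
    nlinarith [mul_nonneg hcm2 w1, mul_nonneg hcm1 w2, mul_nonneg hc0 w3,
      mul_nonneg (mul_nonneg (show (0:ℝ) ≤ 2 - M by linarith) hcm1) hy0.le,
      mul_nonneg (mul_nonneg (show (0:ℝ) ≤ 2 - M by linarith) hc0) (sq_nonneg y),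
      mul_nonneg (mul_nonneg (show (0:ℝ) ≤ 2 - M by linarith) hc1) (pow_nonneg hy0.le 3),
      mul_nonneg hc1 (pow_nonneg hy0.le 3), mul_nonneg hM0 hcm2]
  · have hp : 0 < (1 - M) * c1 := by nlinarith
    refine ⟨max 1 ((4 * (cm2 + cm1 + c0) + 1) / ((1 - M) * c1)),
      lt_max_of_lt_left one_pos, ?_⟩
    set y := max 1 ((4 * (cm2 + cm1 + c0) + 1) / ((1 - M) * c1)) with hy
    have hy1 : 1 ≤ y := le_max_left _ _
    have hy0 : 0 < y := lt_of_lt_of_le one_pos hy1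
    have hyF : 4 * (cm2 + cm1 + c0) + 1 ≤ (1 - M) * c1 * y := by
      have := le_max_right 1 ((4 * (cm2 + cm1 + c0) + 1) / ((1 - M) * c1))
      rw [div_le_iff₀ hp] at this
      linarith
    have key2 : (4 * (cm2 + cm1 + c0) + 1) * y ^ 2 ≤ (1 - M) * c1 * y * y ^ 2 :=
      mul_le_mul_of_nonneg_right hyF (sq_nonneg y)
    simp only [G]
    have w1 : (0:ℝ) ≤ y ^ 2 - 1 := by
      nlinarith [mul_nonneg (sub_nonneg.2 hy1) (show (0:ℝ) ≤ y + 1 by linarith)]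
    have w2 : (0:ℝ) ≤ y ^ 2 - y := by
      nlinarith [mul_nonneg hy0.le (sub_nonneg.2 hy1)]
    nlinarith [mul_nonneg hcm2 w1, mul_nonneg hcm1 w2,
      mul_nonneg (mul_nonneg (show (0:ℝ) ≤ 2 - M by linarith) hcm1) hy0.le,
      mul_nonneg (mul_nonneg (show (0:ℝ) ≤ 2 - M by linarith) hc0) (sq_nonneg y),
      mul_nonneg (mul_nonneg (show (0:ℝ) ≤ 2 - M by linarith) hc2) (pow_nonneg hy0.le 4),
      mul_nonneg hc2 (pow_nonneg hy0.le 4), mul_nonneg hM0 hcm2]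

lemma keyterm (s c : ℝ) (hc : 0 ≤ c) (a b : ℝ) (ha : 0 < a) (hab : a < b) (k : ℕ) :
    0 ≤ ((k : ℝ) - s) * c * (a ^ s * b ^ k - b ^ s * a ^ k) := by
  have hb : 0 < b := ha.trans hab
  have hr : 1 < b / a := (one_lt_div ha).2 hab
  have hr0 : 0 ≤ b / a := by positivity
  have hbk : b ^ k = a ^ k * (b / a) ^ k := by
    rw [← mul_pow]; field_simp
  have hbs : b ^ s = a ^ s * (b / a) ^ s := by
    rw [← Real.mul_rpow ha.le hr0]; field_simp
  have hkk : (b / a) ^ k = (b / a) ^ (k : ℝ) := (Real.rpow_natCast _ k).symm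
  have hid : a ^ s * b ^ k - b ^ s * a ^ k
      = a ^ s * a ^ k * ((b / a) ^ (k : ℝ) - (b / a) ^ s) := by
    rw [hbk, hbs, hkk]; ring
  rw [hid]
  have has : 0 < a ^ s := Real.rpow_pos_of_pos ha s
  have hak : 0 < a ^ k := pow_pos ha k
  rcases lt_trichotomy ((k : ℝ)) s with h | h | h
  · have hd := (Real.rpow_lt_rpow_left_iff hr).2 h
    have h1 : 0 < (s - (k : ℝ)) * ((b / a) ^ s - (b / a) ^ (k : ℝ)) :=
      mul_pos (by linarith) (by linarith)
    nlinarith [mul_nonneg hc (mul_pos (mul_pos has hak) h1).le]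
  · rw [h]; simp
  · have hd := (Real.rpow_lt_rpow_left_iff hr).2 h
    have h1 : 0 < ((k : ℝ) - s) * ((b / a) ^ (k : ℝ) - (b / a) ^ s) :=
      mul_pos (by linarith) (by linarith)
    nlinarith [mul_nonneg hc (mul_pos (mul_pos has hak) h1).le]

lemma keyterm' (s c : ℝ) (hc : 0 < c) (a b : ℝ) (ha : 0 < a) (hab : a < b) (k : ℕ)
    (hk : (k : ℝ) ≠ s) :
    0 < ((k : ℝ) - s) * c * (a ^ s * b ^ k - b ^ s * a ^ k) := by
  have hb : 0 < b := ha.trans hab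
  have hr : 1 < b / a := (one_lt_div ha).2 hab
  have hr0 : 0 ≤ b / a := by positivity
  have hbk : b ^ k = a ^ k * (b / a) ^ k := by
    rw [← mul_pow]; field_simp
  have hbs : b ^ s = a ^ s * (b / a) ^ s := by
    rw [← Real.mul_rpow ha.le hr0]; field_simp
  have hkk : (b / a) ^ k = (b / a) ^ (k : ℝ) := (Real.rpow_natCast _ k).symm
  have hid : a ^ s * b ^ k - b ^ s * a ^ k
      = a ^ s * a ^ k * ((b / a) ^ (k : ℝ) - (b / a) ^ s) := by
    rw [hbk, hbs, hkk]; ring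
  rw [hid]
  have has : 0 < a ^ s := Real.rpow_pos_of_pos ha s
  have hak : 0 < a ^ k := pow_pos ha k
  rcases lt_or_gt_of_ne hk with h | h
  · have hd := (Real.rpow_lt_rpow_left_iff hr).2 h
    have h1 : 0 < (s - (k : ℝ)) * ((b / a) ^ s - (b / a) ^ (k : ℝ)) :=
      mul_pos (by linarith) (by linarith)
    nlinarith [mul_pos hc (mul_pos (mul_pos has hak) h1)]
  · have hd := (Real.rpow_lt_rpow_left_iff hr).2 h
    have h1 : 0 < ((k : ℝ) - s) * ((b / a) ^ (k : ℝ) - (b / a) ^ s) :=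
      mul_pos (by linarith) (by linarith)
    nlinarith [mul_pos hc (mul_pos (mul_pos has hak) h1)]

lemma comp (M cm2 cm1 c0 c1 c2 : ℝ) (hM0 : 0 ≤ M)
    (hcm2 : 0 ≤ cm2) (hcm1 : 0 ≤ cm1) (hc0 : 0 ≤ c0) (hc1 : 0 ≤ c1) (hc2 : 0 ≤ c2)
    (hstrict : 0 < cm2 ∨ 0 < cm1 ∨ (0 < M ∧ 0 < c0) ∨ (1 < M ∧ 0 < c1))
    (a b : ℝ) (ha : 0 < a) (hab : a < b) :
    b ^ (M + 2) * G M cm2 cm1 c0 c1 c2 a < a ^ (M + 2) * G M cm2 cm1 c0 c1 c2 b := by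
  have h0 := keyterm (M + 2) cm2 hcm2 a b ha hab 0
  have h1 := keyterm (M + 2) cm1 hcm1 a b ha hab 1
  have h2 := keyterm (M + 2) c0 hc0 a b ha hab 2
  have h3 := keyterm (M + 2) c1 hc1 a b ha hab 3
  have h4 := keyterm (M + 2) c2 hc2 a b ha hab 4
  push_cast at h0 h1 h2 h3 h4
  simp only [G]
  rcases hstrict with h | h | ⟨hm, h⟩ | ⟨hm, h⟩
  · have hs := keyterm' (M + 2) cm2 h a b ha hab 0 (by push_cast; intro hh; linarith)
    push_cast at hs; nlinarith [hs]
  · have hs := keyterm' (M + 2) cm1 h a b ha hab 1 (by push_cast; intro hh; linarith)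
    push_cast at hs; nlinarith [hs]
  · have hs := keyterm' (M + 2) c0 h a b ha hab 2 (by push_cast; intro hh; linarith)
    push_cast at hs; nlinarith [hs]
  · have hs := keyterm' (M + 2) c1 h a b ha hab 3 (by push_cast; intro hh; linarith)
    push_cast at hs; nlinarith [hs]


theorem stmt13 (M cm2 cm1 c0 c1 c2 : ℝ) (hM0 : 0 ≤ M) (hM2 : M < 2)
    (hcm2 : 0 ≤ cm2) (hcm1 : 0 ≤ cm1) (hc0 : 0 ≤ c0) (hc1 : 0 ≤ c1) (hc2 : 0 ≤ c2)
    (hlow : 0 < (if (-2 : ℝ) < M then cm2 else 0) + (if (-1 : ℝ) < M then cm1 else 0)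
        + (if (0 : ℝ) < M then c0 else 0) + (if (1 : ℝ) < M then c1 else 0)
        + (if (2 : ℝ) < M then c2 else 0))
    (hhigh : 0 < (if M < (-2 : ℝ) then cm2 else 0) + (if M < (-1 : ℝ) then cm1 else 0)
        + (if M < (0 : ℝ) then c0 else 0) + (if M < (1 : ℝ) then c1 else 0)
        + (if M < (2 : ℝ) then c2 else 0)) :
    ∃! l : ℝ, 0 < l ∧
      (-2 - M) * cm2 + (-1 - M) * cm1 * l + (0 - M) * c0 * l ^ 2
        + (1 - M) * c1 * l ^ 3 + (2 - M) * c2 * l ^ 4 = 0 := by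
  rw [if_pos (show (-2:ℝ) < M by linarith), if_pos (show (-1:ℝ) < M by linarith),
    if_neg (show ¬ (2:ℝ) < M by linarith)] at hlow
  rw [if_neg (show ¬ M < (-2:ℝ) by linarith), if_neg (show ¬ M < (-1:ℝ) by linarith),
    if_neg (show ¬ M < (0:ℝ) by linarith), if_pos hM2] at hhigh
  have hstrict : 0 < cm2 ∨ 0 < cm1 ∨ (0 < M ∧ 0 < c0) ∨ (1 < M ∧ 0 < c1) := by
    by_cases p1 : 0 < cm2
    · exact Or.inl p1
    by_cases p2 : 0 < cm1
    · exact Or.inr (Or.inl p2)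
    right; right
    have e1 : cm2 = 0 := le_antisymm (not_lt.1 p1) hcm2
    have e2 : cm1 = 0 := le_antisymm (not_lt.1 p2) hcm1
    rw [e1, e2] at hlow
    by_cases pM : (0:ℝ) < M
    · rw [if_pos pM] at hlow
      by_cases p3 : 0 < c0
      · exact Or.inl ⟨pM, p3⟩
      have e3 : c0 = 0 := le_antisymm (not_lt.1 p3) hc0
      rw [e3] at hlow
      right
      by_cases pM1 : (1:ℝ) < M
      · rw [if_pos pM1] at hlow
        exact ⟨pM1, by linarith⟩
      · rw [if_neg pM1] at hlow; linarith
    · rw [if_neg pM] at hlow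
      have pM1 : ¬ (1:ℝ) < M := fun hh => pM (by linarith)
      rw [if_neg pM1] at hlow
      linarith
  have hpos : 0 < c2 ∨ (M < 1 ∧ 0 < c1) := by
    by_cases q1 : 0 < c2
    · exact Or.inl q1
    have e4 : c2 = 0 := le_antisymm (not_lt.1 q1) hc2
    rw [e4] at hhigh
    right
    by_cases qM : M < (1:ℝ)
    · rw [if_pos qM] at hhigh
      exact ⟨qM, by linarith⟩
    · rw [if_neg qM] at hhigh; linarith
  obtain ⟨x, hx0, hxneg⟩ := negpoint M cm2 cm1 c0 c1 c2 hM0 hM2 hcm2 hcm1 hc0 hc1 hc2 hstrict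
  obtain ⟨y, hy0, hypos⟩ := pospoint M cm2 cm1 c0 c1 c2 hM0 hM2 hcm2 hcm1 hc0 hc1 hc2 hpos
  have hxy : x < y := by
    by_contra hcon
    push_neg at hcon
    rcases eq_or_lt_of_le hcon with heq | hlt
    · rw [heq] at hypos; linarith
    · have hcmp := comp M cm2 cm1 c0 c1 c2 hM0 hcm2 hcm1 hc0 hc1 hc2 hstrict y x hy0 hlt
      have h1 : 0 < x ^ (M + 2) := Real.rpow_pos_of_pos hx0 _
      have h2 : 0 < y ^ (M + 2) := Real.rpow_pos_of_pos hy0 _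
      nlinarith [mul_pos h2 hypos, mul_pos h1 (neg_pos.2 hxneg)]
  have hcont : Continuous (G M cm2 cm1 c0 c1 c2) := by
    unfold G; continuity
  obtain ⟨l, hlmem, hGl⟩ := intermediate_value_Icc hxy.le hcont.continuousOn
    ⟨hxneg.le, hypos.le⟩
  have hl0 : 0 < l := lt_of_lt_of_le hx0 hlmem.1
  refine ⟨l, ⟨hl0, ?_⟩, ?_⟩
  · have := hGl; simp only [G] at this; exact this
  · rintro z ⟨hz0, hGz⟩
    have hGz' : G M cm2 cm1 c0 c1 c2 z = 0 := by simp only [G]; exact hGz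
    by_contra hne
    rcases lt_or_gt_of_ne hne with hlt | hlt
    · have hcmp := comp M cm2 cm1 c0 c1 c2 hM0 hcm2 hcm1 hc0 hc1 hc2 hstrict z l hz0 hlt
      rw [hGz', hGl] at hcmp
      simp at hcmp
    · have hcmp := comp M cm2 cm1 c0 c1 c2 hM0 hcm2 hcm1 hc0 hc1 hc2 hstrict l z hl0 hlt
      rw [hGz', hGl] at hcmp
      simp at hcmp
end
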